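/- Let n ≥ 2, let a be the smallest prime divisor of n, and let q ≥ 2 be a prime power. Then (1/a)·∏_{k=1, a∤k}^{n-1} (q^n − q^k) ≥ q^{n(n − n/a − 1)}, with equality only when (n,q) = (2,2) or (3,2). -/

import Mathlib

/-!
Write `a = n.minFac` and `S` for the index set, so `#S = n - n/a` and `n - 1 ∈ S`. The factor
`k = n - 1` is `q^(n-1) (q - 1)`. For the others, `q^n - q^k = q^n (1 - q^(k-n))`, and the
Weierstrass product inequality `∏ (1 - x_k) ≥ 1 - ∑ x_k` together with `∑_{k < n-1} q^k < q^(n-1)`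
gives a product strictly above `q^(n (#S - 1)) (1 - 1/q)`. Altogether the product exceeds
`q^(n (#S - 1)) · q^(n-2) (q - 1)^2`, and `q^(n-2) ≥ 2^(n-2) ≥ n ≥ a` once `n ≥ 4`, so the
inequality is strict there. For `n = 2, 3` it is an explicit polynomial inequality in `q`, tight
only at `q = 2`.
-/

open Finset

theorem one_sub_sum_le_prod_one_sub {ι R : Type*} [CommRing R] [LinearOrder R]
    [IsStrictOrderedRing R] (s : Finset ι) (f : ι → R) (h0 : ∀ i ∈ s, 0 ≤ f i)
    (h1 : ∀ i ∈ s, f i ≤ 1) :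
    1 - ∑ i ∈ s, f i ≤ ∏ i ∈ s, (1 - f i) := by
  classical
  induction s using Finset.induction with
  | empty => simp
  | insert a s ha ih =>
    rw [sum_insert ha, prod_insert ha]
    simp only [mem_insert, forall_eq_or_imp] at h0 h1
    have hs : 0 ≤ ∑ i ∈ s, f i := sum_nonneg h0.2
    nlinarith [ih h0.2 h1.2, mul_nonneg h0.1 hs]

theorem pow_card_mul_one_sub_inv_lt_prod_pow_sub_pow {q m : ℕ} (hq : 2 ≤ q) {T : Finset ℕ}
    (hT : ∀ k ∈ T, k < m) :
    ((q : ℝ) ^ (m + 1)) ^ #T * (1 - (q : ℝ)⁻¹) < ∏ k ∈ T, ((q : ℝ) ^ (m + 1) - (q : ℝ) ^ k) := by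
  have hq1 : (1 : ℝ) < q := by exact_mod_cast hq
  have hfactor : ∀ k ∈ T, (q : ℝ) ^ (m + 1) - (q : ℝ) ^ k
      = (q : ℝ) ^ (m + 1) * (1 - (q : ℝ) ^ k / (q : ℝ) ^ (m + 1)) := fun k _ => by
    field_simp
  rw [prod_congr rfl hfactor, prod_mul_distrib, prod_const]
  refine mul_lt_mul_of_pos_left ?_ (by positivity)
  have hsum : ∑ k ∈ T, (q : ℝ) ^ k < (q : ℝ) ^ m := by exact_mod_cast Nat.geomSum_lt hq hT
  calc 1 - (q : ℝ)⁻¹ = 1 - (q : ℝ) ^ m / (q : ℝ) ^ (m + 1) := by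
        rw [pow_succ, div_mul_cancel_left₀ (by positivity)]
    _ < 1 - ∑ k ∈ T, (q : ℝ) ^ k / (q : ℝ) ^ (m + 1) := by
        rw [← sum_div]
        gcongr
    _ ≤ ∏ k ∈ T, (1 - (q : ℝ) ^ k / (q : ℝ) ^ (m + 1)) :=
        one_sub_sum_le_prod_one_sub _ _ (fun _ _ => by positivity) fun k hk =>
          div_le_one_of_le₀ (pow_le_pow_right₀ hq1.le (by linarith [hT k hk])) (by positivity)

theorem card_filter_not_dvd_Icc_one_sub_one {a n : ℕ} (hn : a ∣ n) :
    #((Icc 1 (n - 1)).filter (fun k => ¬ a ∣ k)) = n - n / a := by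
  have hIoc : (Icc 1 (n - 1)).filter (fun k => ¬ a ∣ k) = (Ioc 0 n).filter (fun k => ¬ a ∣ k) := by
    ext k
    simp only [mem_filter, mem_Icc, mem_Ioc]
    refine and_congr_left fun hk => ?_
    have : k ≠ n := by rintro rfl; exact hk hn
    omega
  have hsplit := card_filter_add_card_filter_not (s := Ioc 0 n) (fun k => a ∣ k)
  rw [Nat.Ioc_filter_dvd_card_eq_div, Nat.card_Ioc] at hsplit
  rw [hIoc]
  omega

theorem add_two_le_two_pow {j : ℕ} (hj : 2 ≤ j) : j + 2 ≤ 2 ^ j := by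
  induction j, hj using Nat.le_induction with
  | base => norm_num
  | succ j _ ih => rw [pow_succ]; omega

theorem add_two_le_pow_mul_sub_one_sq {q j : ℕ} (hq : 2 ≤ q) (hj : 2 ≤ j) :
    ((j + 2 : ℕ) : ℝ) ≤ (q : ℝ) ^ j * ((q : ℝ) - 1) ^ 2 := by
  have hq' : (2 : ℝ) ≤ q := by exact_mod_cast hq
  calc ((j + 2 : ℕ) : ℝ) ≤ 2 ^ j := by exact_mod_cast add_two_le_two_pow hj
    _ ≤ (q : ℝ) ^ j := by gcongr
    _ ≤ (q : ℝ) ^ j * ((q : ℝ) - 1) ^ 2 :=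
        le_mul_of_one_le_right (by positivity) (by nlinarith)

theorem minFac_mul_pow_lt_prod {n q : ℕ} (hn : 4 ≤ n) (hq : 2 ≤ q) :
    (n.minFac : ℝ) * (q : ℝ) ^ (n * (n - n / n.minFac - 1)) <
      ∏ k ∈ (Icc 1 (n - 1)).filter (fun k => ¬ n.minFac ∣ k), ((q : ℝ) ^ n - (q : ℝ) ^ k) := by
  obtain ⟨j, rfl⟩ : ∃ j, n = j + 2 := ⟨n - 2, by omega⟩
  set a := (j + 2).minFac
  set S := (Icc 1 (j + 2 - 1)).filter (fun k => ¬ a ∣ k)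
  have ha : a.Prime := Nat.minFac_prime (by omega)
  have hlast : j + 1 ∈ S := by
    refine mem_filter.2 ⟨mem_Icc.2 ⟨by omega, by omega⟩, fun h => ha.one_lt.ne' ?_⟩
    exact Nat.dvd_one.1 ((Nat.dvd_add_right h).1 (Nat.minFac_dvd (j + 2)))
  set T := S.erase (j + 1)
  have hcard : #T = j + 2 - (j + 2) / a - 1 := by
    rw [card_erase_of_mem hlast, card_filter_not_dvd_Icc_one_sub_one (Nat.minFac_dvd _)]
  have hrest := pow_card_mul_one_sub_inv_lt_prod_pow_sub_pow hq (m := j + 1) (T := T)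
    fun k hk => by
      have hkS := mem_Icc.1 (mem_filter.1 (mem_of_mem_erase hk)).1
      have := ne_of_mem_erase hk
      omega
  set lead := (q : ℝ) ^ (j + 2) - (q : ℝ) ^ (j + 1)
  have hlead_pos : 0 < lead := sub_pos.2 (pow_lt_pow_right₀ (by exact_mod_cast hq) (by omega))
  have hlead : (a : ℝ) ≤ lead * (1 - (q : ℝ)⁻¹) := by
    have hq0 : (q : ℝ) ≠ 0 := by positivity
    calc (a : ℝ) ≤ ((j + 2 : ℕ) : ℝ) := by exact_mod_cast Nat.minFac_le (by omega)
      _ ≤ (q : ℝ) ^ j * ((q : ℝ) - 1) ^ 2 := add_two_le_pow_mul_sub_one_sq hq (by omega)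
      _ = lead * (1 - (q : ℝ)⁻¹) := by field_simp; ring
  rw [← mul_prod_erase S _ hlast, ← hcard, pow_mul]
  calc (a : ℝ) * ((q : ℝ) ^ (j + 2)) ^ #T
      ≤ lead * (1 - (q : ℝ)⁻¹) * ((q : ℝ) ^ (j + 2)) ^ #T := by gcongr
    _ = lead * (((q : ℝ) ^ (j + 2)) ^ #T * (1 - (q : ℝ)⁻¹)) := by ring
    _ < lead * ∏ k ∈ T, ((q : ℝ) ^ (j + 2) - (q : ℝ) ^ k) :=
        mul_lt_mul_of_pos_left hrest hlead_pos

theorem two_le_sq_sub_self {x : ℝ} (hx : 2 ≤ x) : 2 ≤ x ^ 2 - x ∧ (x ^ 2 - x = 2 → x = 2) := by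
  have h : x ^ 2 - x - 2 = (x + 1) * (x - 2) := by ring
  have hpos : 0 < x + 1 := by linarith
  refine ⟨sub_nonneg.1 (h ▸ mul_nonneg hpos.le (sub_nonneg.2 hx)), fun heq => ?_⟩
  exact sub_eq_zero.1 ((mul_eq_zero.1 (h ▸ sub_eq_zero.2 heq)).resolve_left hpos.ne')

theorem three_mul_pow_three_le {x : ℝ} (hx : 2 ≤ x) :
    3 * x ^ 3 ≤ (x ^ 3 - x) * (x ^ 3 - x ^ 2) ∧
      ((x ^ 3 - x) * (x ^ 3 - x ^ 2) = 3 * x ^ 3 → x = 2) := by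
  have h : (x ^ 3 - x) * (x ^ 3 - x ^ 2) - 3 * x ^ 3 = x ^ 3 * (x ^ 2 + x + 1) * (x - 2) := by ring
  have hpos : 0 < x ^ 3 * (x ^ 2 + x + 1) := by positivity
  refine ⟨sub_nonneg.1 (h ▸ mul_nonneg hpos.le (sub_nonneg.2 hx)), fun heq => ?_⟩
  exact sub_eq_zero.1 ((mul_eq_zero.1 (h ▸ sub_eq_zero.2 heq)).resolve_left hpos.ne')

theorem stmt_8_general (n q : ℕ) (hn : 2 ≤ n) (hq2 : 2 ≤ q) :
    (q : ℝ) ^ (n * (n - n / n.minFac - 1)) ≤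
      (∏ k ∈ (Finset.Icc 1 (n - 1)).filter (fun k => ¬ n.minFac ∣ k),
        ((q : ℝ) ^ n - (q : ℝ) ^ k)) / (n.minFac : ℝ) ∧
    ((∏ k ∈ (Finset.Icc 1 (n - 1)).filter (fun k => ¬ n.minFac ∣ k),
        ((q : ℝ) ^ n - (q : ℝ) ^ k)) / (n.minFac : ℝ) = (q : ℝ) ^ (n * (n - n / n.minFac - 1)) →
      (n = 2 ∧ q = 2) ∨ (n = 3 ∧ q = 2)) := by
  have hq : (2 : ℝ) ≤ q := by exact_mod_cast hq2
  have ha : (0 : ℝ) < n.minFac := by exact_mod_cast n.minFac_pos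
  rw [le_div_iff₀ ha, div_eq_iff ha.ne', mul_comm _ (n.minFac : ℝ)]
  rcases (show n = 2 ∨ n = 3 ∨ 4 ≤ n by omega) with rfl | rfl | hn4
  · rw [Nat.prime_two.minFac_eq, show (Icc 1 (2 - 1)).filter (fun k => ¬ 2 ∣ k) = {1} by decide]
    norm_num
    exact (two_le_sq_sub_self hq).imp_right fun h heq => by exact_mod_cast h heq
  · rw [Nat.prime_three.minFac_eq,
      show (Icc 1 (3 - 1)).filter (fun k => ¬ 3 ∣ k) = {1, 2} by decide]
    norm_num
    exact (three_mul_pow_three_le hq).imp_right fun h heq => by exact_mod_cast h heq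
  · have hlt := minFac_mul_pow_lt_prod hn4 hq2
    exact ⟨hlt.le, fun heq => absurd heq hlt.ne'⟩

/-- For `n ≥ 2`, `a = n.minFac` the smallest prime divisor of `n`, and a prime power `q ≥ 2`:
`(1/a)·∏_{k=1, a∤k}^{n-1} (q^n − q^k) ≥ q^{n(n − n/a − 1)}`, with equality only when
`(n,q) = (2,2)` or `(3,2)`. -/
theorem stmt_8 (n q : ℕ) (hn : 2 ≤ n) (hq2 : 2 ≤ q) (hq : IsPrimePow q) :
    (q : ℝ) ^ (n * (n - n / n.minFac - 1)) ≤
      (∏ k ∈ (Finset.Icc 1 (n - 1)).filter (fun k => ¬ n.minFac ∣ k),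
        ((q : ℝ) ^ n - (q : ℝ) ^ k)) / (n.minFac : ℝ) ∧
    ((∏ k ∈ (Finset.Icc 1 (n - 1)).filter (fun k => ¬ n.minFac ∣ k),
        ((q : ℝ) ^ n - (q : ℝ) ^ k)) / (n.minFac : ℝ) = (q : ℝ) ^ (n * (n - n / n.minFac - 1)) →
      (n = 2 ∧ q = 2) ∨ (n = 3 ∧ q = 2)) :=
  stmt_8_general n q hn hq2
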